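/- Fix c ∈ ℂ and define the sequence (P_n) of rational functions in ℂ(x) by P_0 = P_1 = 1 and P_{n+1} = ( −x⁴·(P_n·P_n'' − (P_n')²) − x³·P_n·P_n' + (c·x + 1)·P_n² ) / P_{n−1} for n ≥ 1 (each P_{n−1} being nonzero). Assume that whenever two consecutive terms P_{n−1}, P_n are both polynomials, they are coprime in ℂ[x]. Then every P_n is a polynomial (the Umemura polynomials associated with Painlevé III). -/
import Mathlib


open Polynomial

/-- The derivative of a rational function over `ℂ`, given by the quotient rule
applied to its reduced numerator and denominator. -/
noncomputable def ratDeriv (q : RatFunc ℂ) : RatFunc ℂ :=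
  algebraMap (Polynomial ℂ) (RatFunc ℂ)
      (derivative q.num * q.denom - q.num * derivative q.denom) /
    algebraMap (Polynomial ℂ) (RatFunc ℂ) (q.denom ^ 2)

lemma ratDeriv_algebraMap (p : Polynomial ℂ) :
    ratDeriv (algebraMap (Polynomial ℂ) (RatFunc ℂ) p) =
      algebraMap (Polynomial ℂ) (RatFunc ℂ) (derivative p) := by
  rw [ratDeriv, RatFunc.num_algebraMap, RatFunc.denom_algebraMap]
  simp

/-- The Umemura/Painlevé-III bilinear operator. -/
noncomputable def Np (c : ℂ) (p : Polynomial ℂ) : Polynomial ℂ :=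
  (p * p + (X : Polynomial ℂ) * C c * p * p - (X : Polynomial ℂ) * (X : Polynomial ℂ) * (X : Polynomial ℂ) * p * derivative p + (X : Polynomial ℂ) * (X : Polynomial ℂ) * (X : Polynomial ℂ) * (X : Polynomial ℂ) * derivative p * derivative p - (X : Polynomial ℂ) * (X : Polynomial ℂ) * (X : Polynomial ℂ) * (X : Polynomial ℂ) * p * derivative (derivative p))

lemma dNp (c : ℂ) (p : Polynomial ℂ) :
    derivative (Np c p) = ((2) * p * derivative p + C c * p * p + (2) * (X : Polynomial ℂ) * C c * p * derivative p + (-3) * (X : Polynomial ℂ) * (X : Polynomial ℂ) * p * derivative p + (3) * (X : Polynomial ℂ) * (X : Polynomial ℂ) * (X : Polynomial ℂ) * derivative p * derivative p + (-5) * (X : Polynomial ℂ) * (X : Polynomial ℂ) * (X : Polynomial ℂ) * p * derivative (derivative p) + (X : Polynomial ℂ) * (X : Polynomial ℂ) * (X : Polynomial ℂ) * (X : Polynomial ℂ) * derivative p * derivative (derivative p) - (X : Polynomial ℂ) * (X : Polynomial ℂ) * (X : Polynomial ℂ) * (X : Polynomial ℂ) * p * derivative (derivative (derivative p))) := by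
  unfold Np
  simp only [derivative_add, derivative_sub, derivative_neg, derivative_mul, derivative_X,
    derivative_C, derivative_one, derivative_ofNat, neg_zero, zero_mul, mul_zero, add_zero,
    zero_add]
  ring

lemma dNp2 (c : ℂ) (p : Polynomial ℂ) :
    derivative (((2) * p * derivative p + C c * p * p + (2) * (X : Polynomial ℂ) * C c * p * derivative p + (-3) * (X : Polynomial ℂ) * (X : Polynomial ℂ) * p * derivative p + (3) * (X : Polynomial ℂ) * (X : Polynomial ℂ) * (X : Polynomial ℂ) * derivative p * derivative p + (-5) * (X : Polynomial ℂ) * (X : Polynomial ℂ) * (X : Polynomial ℂ) * p * derivative (derivative p) + (X : Polynomial ℂ) * (X : Polynomial ℂ) * (X : Polynomial ℂ) * (X : Polynomial ℂ) * derivative p * derivative (derivative p) - (X : Polynomial ℂ) * (X : Polynomial ℂ) * (X : Polynomial ℂ) * (X : Polynomial ℂ) * p * derivative (derivative (derivative p)))) = ((2) * derivative p * derivative p + (2) * p * derivative (derivative p) + (4) * C c * p * derivative p + (-6) * (X : Polynomial ℂ) * p * derivative p + (2) * (X : Polynomial ℂ) * C c * derivative p * derivative p + (2) * (X : Polynomial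 ℂ) * C c * p * derivative (derivative p) + (6) * (X : Polynomial ℂ) * (X : Polynomial ℂ) * derivative p * derivative p + (-18) * (X : Polynomial ℂ) * (X : Polynomial ℂ) * p * derivative (derivative p) + (5) * (X : Polynomial ℂ) * (X : Polynomial ℂ) * (X : Polynomial ℂ) * derivative p * derivative (derivative p) + (-9) * (X : Polynomial ℂ) * (X : Polynomial ℂ) * (X : Polynomial ℂ) * p * derivative (derivative (derivative p)) + (X : Polynomial ℂ) * (X : Polynomial ℂ) * (X : Polynomial ℂ) * (X : Polynomial ℂ) * derivative (derivative p) * derivative (derivative p) - (X : Polynomial ℂ) * (X : Polynomial ℂ) * (X : Polynomial ℂ) * (X : Polynomial ℂ) * p * derivative (derivative (derivative (derivative p)))) := by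
  simp only [derivative_add, derivative_sub, derivative_neg, derivative_mul, derivative_X,
    derivative_C, derivative_one, derivative_ofNat, neg_zero, zero_mul, mul_zero, add_zero,
    zero_add]
  ring

set_option maxHeartbeats 2000000 in
set_option maxRecDepth 8000 in
lemma keyAlg (x c q q1 q2 q3 q4 s s1 s2 r r1 r2 t : Polynomial ℂ)
    (h1 : (q * q + x * c * q * q - x * x * x * q * q1 + x * x * x * x * q1 * q1 - x * x * x * x * q * q2) = s * r)
    (h1' : ((2) * q * q1 + c * q * q + (2) * x * c * q * q1 + (-3) * x * x * q * q1 + (3) * x * x * x * q1 * q1 + (-5) * x * x * x * q * q2 + x * x * x * x * q1 * q2 - x * x * x * x * q * q3) = s1 * r + s * r1)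
    (h1'' : ((2) * q1 * q1 + (2) * q * q2 + (4) * c * q * q1 + (-6) * x * q * q1 + (2) * x * c * q1 * q1 + (2) * x * c * q * q2 + (6) * x * x * q1 * q1 + (-18) * x * x * q * q2 + (5) * x * x * x * q1 * q2 + (-9) * x * x * x * q * q3 + x * x * x * x * q2 * q2 - x * x * x * x * q * q4) = s2 * r + 2 * (s1 * r1) + s * r2)
    (h2 : (s * s + x * c * s * s - x * x * x * s * s1 + x * x * x * x * s1 * s1 - x * x * x * x * s * s2) = t * q) :
    q ∣ s * s * s * s * (r * r + x * c * r * r - x * x * x * r * r1 + x * x * x * x * r1 * r1 - x * x * x * x * r * r2) :=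
  ⟨(q^3*s^2 + (3)*x*c*q^3*s^2 + (3)*x^2*c^2*q^3*s^2 + (-4)*x^3*q^2*q1*s^2 + x^3*q^3*s*s1 + (-1)*x^3*c*q^3*s^2 + x^3*c^3*q^3*s^2 + (4)*x^4*q*q1^2*s^2 + (-4)*x^4*q^2*q2*s^2 + (-1)*x^4*q^3*s1^2 + x^4*q^3*s*s2 + (-8)*x^4*c*q^2*q1*s^2 + (2)*x^4*c*q^3*s*s1 + (9)*x^5*q^2*q1*s^2 + (8)*x^5*c*q*q1^2*s^2 + (-8)*x^5*c*q^2*q2*s^2 + (-2)*x^5*c*q^3*s1^2 + (2)*x^5*c*q^3*s*s2 + (-4)*x^5*c^2*q^2*q1*s^2 + x^5*c^2*q^3*s*s1 + (-18)*x^6*q*q1^2*s^2 + (23)*x^6*q^2*q2*s^2 + (-2)*x^6*q^2*q1*s*s1 + (4)*x^6*c*q^2*q1*s^2 + (4)*x^6*c^2*q*q1^2*s^2 + (-4)*x^6*c^2*q^2*q2*s^2 + (-1)*x^6*c^2*q^3*s1^2 + x^6*c^2*q^3*s*s2 + (10)*x^7*q1^3*s^2 + (-20)*x^7*q*q1*q2*s^2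 + (2)*x^7*q*q1^2*s*s1 + (10)*x^7*q^2*q3*s^2 + (-2)*x^7*q^2*q2*s*s1 + (2)*x^7*q^2*q1*s1^2 + (-2)*x^7*q^2*q1*s*s2 + (-9)*x^7*c*q*q1^2*s^2 + (14)*x^7*c*q^2*q2*s^2 + (-2)*x^7*c*q^2*q1*s*s1 + (2)*x^8*q1^2*q2*s^2 + (-1)*x^8*q1^4*t + (2)*x^8*q*q2^2*s^2 + (-4)*x^8*q*q1*q3*s^2 + (-2)*x^8*q*q1^2*s1^2 + (2)*x^8*q*q1^2*s*s2 + x^8*q^2*q4*s^2 + (2)*x^8*q^2*q2*s1^2 + (-2)*x^8*q^2*q2*s*s2 + (6)*x^8*c*q1^3*s^2 + (-14)*x^8*c*q*q1*q2*s^2 + (2)*x^8*c*q*q1^2*s*s1 + (8)*x^8*c*q^2*q3*s^2 + (-2)*x^8*c*q^2*q2*s*s1 + (2)*x^8*c*q^2*q1*s1^2 + (-2)*x^8*c*q^2*q1*s*s2 + (-2)*x^9*q*q1*q2*s^2 + x^9*q*q1^2*s*s1 + (2)*x^9*c*q1^2*q2*s^2 + (2)*x^9*c*q*q2^2*s^2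 + (-4)*x^9*c*q*q1*q3*s^2 + (-2)*x^9*c*q*q1^2*s1^2 + (2)*x^9*c*q*q1^2*s*s2 + x^9*c*q^2*q4*s^2 + (2)*x^9*c*q^2*q2*s1^2 + (-2)*x^9*c*q^2*q2*s*s2 + (2)*x^10*q1^2*q2*s^2 + (-2)*x^10*q1^3*s*s1 + (2)*x^10*q*q2^2*s^2 + (-4)*x^10*q*q1*q3*s^2 + (2)*x^10*q*q1*q2*s*s1 + (-1)*x^10*q*q1^2*s1^2 + x^10*q*q1^2*s*s2 + (-3)*x^11*q1*q2^2*s^2 + (4)*x^11*q1^2*q3*s^2 + (-2)*x^11*q1^2*q2*s*s1 + (2)*x^11*q1^3*s1^2 + (-2)*x^11*q1^3*s*s2 + x^11*q*q2^2*s*s1 + (-1)*x^11*q*q1*q4*s^2 + (-2)*x^11*q*q1*q2*s1^2 + (2)*x^11*q*q1*q2*s*s2 + x^12*q2^3*s^2 + (-2)*x^12*q1*q2*q3*s^2 + x^12*q1^2*q4*s^2 + (2)*x^12*q1^2*q2*s1^2 + (-2)*x^12*q1^2*q2*s*s2 + x^12*q*q3^2*s^2 + (-1)*x^12*q*q2*q4*s^2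 + (-1)*x^12*q*q2^2*s1^2 + x^12*q*q2^2*s*s2), by
    linear_combination (((-1)*s^3*r + (-1)*q^2*s^2 + (-1)*x*c*s^3*r + (-2)*x*c*q^2*s^2 + (-1)*x^2*c^2*q^2*s^2 + (-1)*x^3*s^2*s1*r + (3)*x^3*q*q1*s^2 + (-1)*x^3*q^2*s*s1 + x^3*c*q^2*s^2 + x^4*s*s1^2*r + (-1)*x^4*s^2*s2*r + x^4*q1^2*s^2 + (3)*x^4*q*q2*s^2 + x^4*q^2*s1^2 + (-1)*x^4*q^2*s*s2 + (7)*x^4*c*q*q1*s^2 + (-1)*x^4*c*q^2*s*s1 + (-9)*x^5*q*q1*s^2 + x^5*c*q1^2*s^2 + (3)*x^5*c*q*q2*s^2 + x^5*c*q^2*s1^2 + (-1)*x^5*c*q^2*s*s2 + (9)*x^6*q1^2*s^2 + (-23)*x^6*q*q2*s^2 + x^6*q*q1*s*s1 + (6)*x^7*q1*q2*s^2 + (-1)*x^7*q1^2*s*s1 + (-10)*x^7*q*q3*s^2 + x^7*q*q2*s*s1 + (-1)*x^7*q*q1*s1^2 + x^7*q*q1*s*s2 + x^8*q2^2*s^2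 + x^8*q1^2*s1^2 + (-1)*x^8*q1^2*s*s2 + (-1)*x^8*q*q4*s^2 + (-1)*x^8*q*q2*s1^2 + x^8*q*q2*s*s2)) * h1 + ((x^3*s^3*r + (-1)*x^4*s^2*s1*r + (-1)*x^4*s^3*r1 + (-2)*x^4*q*q1*s^2 + (-1)*x^4*c*q^2*s^2 + (-2)*x^5*c*q*q1*s^2 + (3)*x^6*q*q1*s^2 + (-3)*x^7*q1^2*s^2 + (5)*x^7*q*q2*s^2 + (-1)*x^8*q1*q2*s^2 + x^8*q*q3*s^2)) * h1' + ((x^4*s^3*r)) * h1'' + (((-1)*x^8*q1^4)) * h2⟩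

lemma num_eq (c : ℂ) (p : Polynomial ℂ) :
    (algebraMap (Polynomial ℂ) (RatFunc ℂ) (-(Polynomial.X ^ 4)) *
            (algebraMap (Polynomial ℂ) (RatFunc ℂ) p *
              ratDeriv (ratDeriv (algebraMap (Polynomial ℂ) (RatFunc ℂ) p)) -
              (ratDeriv (algebraMap (Polynomial ℂ) (RatFunc ℂ) p)) ^ 2)
          + algebraMap (Polynomial ℂ) (RatFunc ℂ) (-(Polynomial.X ^ 3)) *
              algebraMap (Polynomial ℂ) (RatFunc ℂ) p *
              ratDeriv (algebraMap (Polynomial ℂ) (RatFunc ℂ) p)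
          + algebraMap (Polynomial ℂ) (RatFunc ℂ) (Polynomial.C c * Polynomial.X + 1) *
              (algebraMap (Polynomial ℂ) (RatFunc ℂ) p) ^ 2) =
      algebraMap (Polynomial ℂ) (RatFunc ℂ) (Np c p) := by
  simp only [ratDeriv_algebraMap, ← map_pow, ← map_mul, ← map_sub, ← map_add]
  congr 1
  unfold Np
  ring

/-- Painlevé III / Umemura polynomials: fix `c ∈ ℂ`; if `P₀ = P₁ = 1`,
every `Pₙ ≠ 0`,
`P_{n+1} = (−x⁴·(Pₙ·Pₙ'' − (Pₙ')²) − x³·Pₙ·Pₙ' + (c·x + 1)·Pₙ²) / P_{n−1}` for `n ≥ 1`, and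
any two consecutive terms that are both polynomials are coprime in `ℂ[x]`, then every `Pₙ`
is a polynomial. -/
theorem stmt_17 (c : ℂ) (P : ℕ → RatFunc ℂ)
    (hP0 : P 0 = 1) (hP1 : P 1 = 1)
    (hPne : ∀ n, P n ≠ 0)
    (hrec : ∀ n : ℕ, 1 ≤ n →
      P (n + 1) =
        (algebraMap (Polynomial ℂ) (RatFunc ℂ) (-(Polynomial.X ^ 4)) *
            (P n * ratDeriv (ratDeriv (P n)) - (ratDeriv (P n)) ^ 2)
          + algebraMap (Polynomial ℂ) (RatFunc ℂ) (-(Polynomial.X ^ 3)) * P n * ratDeriv (P n)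
          + algebraMap (Polynomial ℂ) (RatFunc ℂ) (Polynomial.C c * Polynomial.X + 1) *
              (P n) ^ 2) / P (n - 1))
    (hcop : ∀ n : ℕ, 1 ≤ n → ∀ q r : Polynomial ℂ,
      P (n - 1) = algebraMap (Polynomial ℂ) (RatFunc ℂ) q →
      P n = algebraMap (Polynomial ℂ) (RatFunc ℂ) r → IsCoprime q r) :
    ∀ n, ∃ q : Polynomial ℂ, P n = algebraMap (Polynomial ℂ) (RatFunc ℂ) q := by
  have rel : ∀ m : ℕ, 1 ≤ m → ∀ b : Polynomial ℂ,
      P m = algebraMap (Polynomial ℂ) (RatFunc ℂ) b →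
      P (m + 1) * P (m - 1) = algebraMap (Polynomial ℂ) (RatFunc ℂ) (Np c b) := by
    intro m hm b hb
    rw [hrec m hm, hb, num_eq]
    exact div_mul_cancel₀ _ (hPne (m - 1))
  have relp : ∀ m : ℕ, 1 ≤ m → ∀ e b d : Polynomial ℂ,
      P (m - 1) = algebraMap (Polynomial ℂ) (RatFunc ℂ) e →
      P m = algebraMap (Polynomial ℂ) (RatFunc ℂ) b →
      P (m + 1) = algebraMap (Polynomial ℂ) (RatFunc ℂ) d →
      Np c b = e * d := by
    intro m hm e b d he hb hd
    have h := rel m hm b hb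
    rw [hd, he, ← map_mul] at h
    have h2 := RatFunc.algebraMap_injective ℂ h
    rw [← h2, mul_comm]
  intro n
  induction n using Nat.strong_induction_on with
  | _ n ih =>
    obtain _ | _ | _ | _ | m := n
    · exact ⟨1, by rw [hP0, map_one]⟩
    · exact ⟨1, by rw [hP1, map_one]⟩
    · have h := rel 1 le_rfl 1 (by rw [hP1, map_one])
      have e0 : (1:ℕ) - 1 = 0 := rfl
      rw [e0, hP0, mul_one] at h
      exact ⟨Np c 1, h⟩
    · obtain ⟨b2, hb2⟩ := ih 2 (by omega)
      have h := rel 2 (by omega) b2 hb2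
      have e1 : (2:ℕ) - 1 = 1 := rfl
      rw [e1, hP1, mul_one] at h
      exact ⟨Np c b2, h⟩
    · obtain ⟨e, he⟩ := ih m (by omega)
      obtain ⟨a, ha⟩ := ih (m + 1) (by omega)
      obtain ⟨b, hb⟩ := ih (m + 2) (by omega)
      obtain ⟨d, hd⟩ := ih (m + 3) (by omega)
      have hNa : Np c a = e * b := relp (m + 1) (by omega) e a b he ha hb
      have hNb : Np c b = a * d := relp (m + 2) (by omega) a b d ha hb hd
      have cop : IsCoprime a b := hcop (m + 2) (by omega) a b ha hb
      -- derived derivative relations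
      have hNbU := hNb
      simp only [Np] at hNbU
      have hNaU := hNa
      simp only [Np] at hNaU
      have hNb1 := congrArg derivative hNb
      rw [dNp] at hNb1
      simp only [derivative_mul] at hNb1
      have hNb2 := congrArg derivative hNb1
      rw [dNp2] at hNb2
      simp only [derivative_add, derivative_mul] at hNb2
      have dvd1 : b ∣ a * a * a * a * Np c d := by
        have := keyAlg X (C c) b (derivative b) (derivative (derivative b))
          (derivative (derivative (derivative b)))
          (derivative (derivative (derivative (derivative b))))
          a (derivative a) (derivative (derivative a))
          d (derivative d) (derivative (derivative d)) e
          (by linear_combination hNbU)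
          (by linear_combination hNb1)
          (by linear_combination hNb2)
          (by linear_combination hNaU)
        have hNd : Np c d = (d * d + (X : Polynomial ℂ) * C c * d * d - (X : Polynomial ℂ) * (X : Polynomial ℂ) * (X : Polynomial ℂ) * d * derivative d + (X : Polynomial ℂ) * (X : Polynomial ℂ) * (X : Polynomial ℂ) * (X : Polynomial ℂ) * derivative d * derivative d - (X : Polynomial ℂ) * (X : Polynomial ℂ) * (X : Polynomial ℂ) * (X : Polynomial ℂ) * d * derivative (derivative d)) := by unfold Np; ring
        rw [hNd]
        exact this
      have cop4 : IsCoprime (a * a * a * a) b :=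
        ((cop.mul_left cop).mul_left cop).mul_left cop
      obtain ⟨w, hw⟩ := cop4.symm.dvd_of_dvd_mul_left dvd1
      have hfin := rel (m + 3) (by omega) d hd
      have e1 : m + 3 - 1 = m + 2 := rfl
      rw [e1, hb, hw, map_mul,
        mul_comm ((algebraMap (Polynomial ℂ) (RatFunc ℂ)) b)] at hfin
      refine ⟨w, mul_right_cancel₀ ?_ hfin⟩
      rw [← hb]
      exact hPne (m + 2)
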